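/- Set S₁ = {(15−√3)/3, (15+√3)/3}, S₂ = {z ∈ ℂ : z³ − 15z² + 74z − 120 = 0} = {4, 5, 6} and S₃ = {∞}. Then for every nonconstant meromorphic function φ on ℂ, the functions f = φ + 10 and g = −φ satisfy E_f(S_j, ∞) = E_g(S_j, ∞) for j = 1, 2, 3 (in particular E_f(S₁, 0) = E_g(S₁, 0), E_f(S₂, 3) = E_g(S₂, 3), E_f(S₃, 1) = E_g(S₃, 1)), yet f ≢ g. -/

import Mathlib

open Complex Filter MeasureTheory Metric
open scoped Classical

/-- The order of a function at a point, as an integer (`0` if not meromorphic or of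
order `⊤`, i.e. identically zero near the point). -/
noncomputable def mOrd (f : ℂ → ℂ) (z : ℂ) : ℤ :=
  if h : MeromorphicAt f z then (WithTop.untopD 0 (meromorphicOrderAt f z)) else 0

/-- Multiplicity of `z` as an `α`-point of `f`. -/
noncomputable def zMult (f : ℂ → ℂ) (α z : ℂ) : ℕ :=
  (mOrd (fun w => f w - α) z).toNat

/-- Multiplicity of `z` as a pole of `f`. -/
noncomputable def pMult (f : ℂ → ℂ) (z : ℂ) : ℕ :=
  (-(mOrd f z)).toNat

/-- Pointwise contribution of `z` to the multiset `E_f(S, k)`: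
an `α`-point (`α ∈ S`) of multiplicity `m` counts `m` times if `m ≤ k`, else `k+1` times. -/
noncomputable def Ecount (f : ℂ → ℂ) (S : Set ℂ) (k : ℕ) (z : ℂ) : ℕ :=
  ∑ᶠ α ∈ S, min (zMult f α z) (k + 1)

/-- `f` and `g` share the set `S ⊆ ℂ` with weight `k`, i.e. `E_f(S,k) = E_g(S,k)`. -/
def EshareEq (f g : ℂ → ℂ) (S : Set ℂ) (k : ℕ) : Prop :=
  ∀ z : ℂ, Ecount f S k z = Ecount g S k z

/-- `f` and `g` share the set `S ⊆ ℂ` counting multiplicities (weight `∞`). -/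
def EshareEqCM (f g : ℂ → ℂ) (S : Set ℂ) : Prop :=
  ∀ z : ℂ, (∑ᶠ α ∈ S, zMult f α z) = ∑ᶠ α ∈ S, zMult g α z

/-- `f` and `g` share `{∞}` with weight `k`. -/
def EpoleEq (f g : ℂ → ℂ) (k : ℕ) : Prop :=
  ∀ z : ℂ, min (pMult f z) (k + 1) = min (pMult g z) (k + 1)

/-- `f` and `g` share `{∞}` counting multiplicities. -/
def EpoleEqCM (f g : ℂ → ℂ) : Prop :=
  ∀ z : ℂ, pMult f z = pMult g z

/-- Equality of meromorphic functions: `f ≡ g`, i.e. `f = g` off a countable set. -/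
def MEq (f g : ℂ → ℂ) : Prop :=
  ∃ D : Set ℂ, D.Countable ∧ ∀ z ∉ D, f z = g z

/-- `f` is a nonconstant meromorphic function in the plane. -/
def MNonconst (f : ℂ → ℂ) : Prop :=
  MeromorphicOn f Set.univ ∧ ¬ ∃ c : ℂ, MEq f (fun _ => c)

/-- The unintegrated counting function of a pointwise (multiplicity) count `w`:
number of points in the closed disc of radius `t`, counted with `w`. -/
noncomputable def ncount (w : ℂ → ℕ) (t : ℝ) : ℕ :=
  ∑ᶠ z ∈ closedBall (0 : ℂ) t, w z

/-- The integrated counting function associated to an unintegrated one. -/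
noncomputable def integN (nf : ℝ → ℕ) (r : ℝ) : ℝ :=
  (∫ t in (0:ℝ)..r, ((nf t : ℝ) - (nf 0 : ℝ)) / t) + (nf 0 : ℝ) * Real.log r

/-- The Nevanlinna integrated counting function `N(r, f)` of the poles of `f`. -/
noncomputable def NN (f : ℂ → ℂ) (r : ℝ) : ℝ :=
  integN (ncount (pMult f)) r

/-- The Nevanlinna proximity function `m(r, f)`. -/
noncomputable def mprox (f : ℂ → ℂ) (r : ℝ) : ℝ :=
  (2 * Real.pi)⁻¹ *
    ∫ θ in (0:ℝ)..(2 * Real.pi), Real.log (max ‖f (r * Complex.exp (θ * Complex.I))‖ 1)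

/-- The Nevanlinna characteristic `T(r, f)`. -/
noncomputable def Tchar (f : ℂ → ℂ) (r : ℝ) : ℝ :=
  mprox f r + NN f r

/-- `u` is a quantity of type `S(r, h)` : `u r = o(T(r, h))` as `r → ∞`, outside a
possible exceptional set of finite linear measure. -/
def SmallWrt (h : ℂ → ℂ) (u : ℝ → ℝ) : Prop :=
  ∃ E : Set ℝ, volume E < ⊤ ∧
    Tendsto (fun r => u r / Tchar h r) (atTop ⊓ Filter.principal Eᶜ) (nhds 0)



open scoped Topology

section AuxLemmas

lemma mOrd_neg (F : ℂ → ℂ) (z : ℂ) : mOrd (fun w => -(F w)) z = mOrd F z := by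
  by_cases h : MeromorphicAt F z
  · have h' : MeromorphicAt (fun w => -(F w)) z := h.neg
    have hord : meromorphicOrderAt (fun w => -(F w)) z = meromorphicOrderAt F z := by
      rcases eq_or_ne (meromorphicOrderAt F z) ⊤ with ht | ht
      · rw [ht, meromorphicOrderAt_eq_top_iff]
        rw [meromorphicOrderAt_eq_top_iff] at ht
        filter_upwards [ht] with w hw
        simp [hw]
      · obtain ⟨n, hn⟩ := WithTop.ne_top_iff_exists.mp ht
        obtain ⟨g, hg, hgx, hge⟩ := (meromorphicOrderAt_eq_int_iff h).mp hn.symm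
        rw [← hn, meromorphicOrderAt_eq_int_iff h']
        refine ⟨fun w => -(g w), hg.neg, by simpa using hgx, ?_⟩
        filter_upwards [hge] with w hw
        rw [hw, smul_neg]
    rw [mOrd, mOrd, dif_pos h', dif_pos h, hord]
  · have h' : ¬ MeromorphicAt (fun w => -(F w)) z := by
      intro h'
      have h'' : MeromorphicAt (fun w => -(-(F w))) z := h'.neg
      simp only [neg_neg] at h''
      exact h h''
    rw [mOrd, mOrd, dif_neg h', dif_neg h]

lemma an_mero_order_nonneg {F : ℂ → ℂ} {x : ℂ} (hF : AnalyticAt ℂ F x) :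
    0 ≤ meromorphicOrderAt F x := by
  exact hF.meromorphicOrderAt_nonneg

lemma order_congr' {f g : ℂ → ℂ} {x : ℂ} (hf : MeromorphicAt f x)
    (hg : MeromorphicAt g x) (h : ∀ᶠ z in 𝓝[≠] x, f z = g z) : meromorphicOrderAt f x = meromorphicOrderAt g x := by
  rcases eq_or_ne (meromorphicOrderAt f x) ⊤ with ht | ht
  · rw [ht, eq_comm, meromorphicOrderAt_eq_top_iff]
    rw [meromorphicOrderAt_eq_top_iff] at ht
    filter_upwards [ht, h] with w h1 h2
    rw [← h2]; exact h1
  · obtain ⟨n, hn⟩ := WithTop.ne_top_iff_exists.mp ht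
    obtain ⟨G, hG, hGx, hGe⟩ := (meromorphicOrderAt_eq_int_iff hf).mp hn.symm
    rw [← hn, eq_comm, meromorphicOrderAt_eq_int_iff hg]
    exact ⟨G, hG, hGx, by filter_upwards [hGe, h] with w h1 h2; rw [← h2]; exact h1⟩

lemma order_add_const_of_neg {φ : ℂ → ℂ} {x c : ℂ} (hφ : MeromorphicAt φ x)
    (h2 : MeromorphicAt (fun w => φ w + c) x) {n : ℤ} (hn : meromorphicOrderAt φ x = n) (hneg : n < 0) :
    meromorphicOrderAt (fun w => φ w + c) x = n := by
  obtain ⟨g, hg, hgx, hge⟩ := (meromorphicOrderAt_eq_int_iff hφ).mp hn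
  rw [meromorphicOrderAt_eq_int_iff h2]
  refine ⟨fun w => g w + c * (w - x) ^ (-n).toNat, ?_, ?_, ?_⟩
  · exact hg.add (analyticAt_const.mul ((analyticAt_id.sub analyticAt_const).pow _))
  · have h0 : (-n).toNat ≠ 0 := by omega
    simpa [sub_self, zero_pow h0] using hgx
  · filter_upwards [hge, self_mem_nhdsWithin] with w hw hwx
    have hsub : (w - x : ℂ) ≠ 0 := sub_ne_zero.mpr hwx
    have key : ((w - x) ^ n : ℂ) * (w - x) ^ ((-n).toNat : ℕ) = 1 := by
      rw [← zpow_natCast, Int.toNat_of_nonneg (by omega), ← zpow_add₀ hsub]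
      simp
    rw [hw, smul_eq_mul, smul_eq_mul, mul_add]
    rw [mul_comm c, ← mul_assoc, key, one_mul]

lemma order_add_const_nonneg {φ : ℂ → ℂ} {x c : ℂ} (hφ : MeromorphicAt φ x)
    (h2 : MeromorphicAt (fun w => φ w + c) x) (h : 0 ≤ meromorphicOrderAt φ x) : 0 ≤ meromorphicOrderAt (fun w => φ w + c) x := by
  obtain ⟨F, hF, hFe⟩ : ∃ F : ℂ → ℂ, AnalyticAt ℂ F x ∧ ∀ᶠ w in 𝓝[≠] x, φ w = F w := by
    rcases eq_or_ne (meromorphicOrderAt φ x) ⊤ with ht | ht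
    · refine ⟨fun _ => 0, analyticAt_const, ?_⟩
      rw [meromorphicOrderAt_eq_top_iff] at ht
      filter_upwards [ht] with w hw using hw
    · obtain ⟨n, hn⟩ := WithTop.ne_top_iff_exists.mp ht
      have hn0 : 0 ≤ n := by
        rw [← hn] at h; exact_mod_cast h
      obtain ⟨g, hg, hgx, hge⟩ := (meromorphicOrderAt_eq_int_iff hφ).mp hn.symm
      refine ⟨fun w => (w - x) ^ n.toNat * g w,
        ((analyticAt_id.sub analyticAt_const).pow _).mul hg, ?_⟩
      filter_upwards [hge] with w hw
      rw [hw, smul_eq_mul, ← zpow_natCast, Int.toNat_of_nonneg hn0]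
  have hFc : AnalyticAt ℂ (fun w => F w + c) x := hF.add analyticAt_const
  have heq : meromorphicOrderAt (fun w => φ w + c) x = meromorphicOrderAt (fun w => F w + c) x := by
    apply order_congr' h2 hFc.meromorphicAt
    filter_upwards [hFe] with w hw
    rw [hw]
  rw [heq]
  exact an_mero_order_nonneg hFc

lemma untop'_nonneg {o : WithTop ℤ} (h : 0 ≤ o) : 0 ≤ WithTop.untopD 0 o := by
  rcases eq_or_ne o ⊤ with ht | ht
  · simp [ht]
  · obtain ⟨m, hm⟩ := WithTop.ne_top_iff_exists.mp ht
    rw [← hm, WithTop.untopD_coe]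
    rw [← hm] at h
    exact_mod_cast h

lemma pMult_eq_aux {φ : ℂ → ℂ} {z : ℂ} (c : ℂ) (hφ : MeromorphicAt φ z) :
    pMult (fun w => φ w + c) z = pMult (fun w => -φ w) z := by
  have h2 : MeromorphicAt (fun w => φ w + c) z := hφ.add (MeromorphicAt.const _ z)
  have hneg : mOrd (fun w => -φ w) z = mOrd φ z := mOrd_neg φ z
  rw [pMult, pMult, hneg, mOrd, mOrd, dif_pos h2, dif_pos hφ]
  rcases eq_or_ne (meromorphicOrderAt φ z) ⊤ with ht | ht
  · have ha := untop'_nonneg (order_add_const_nonneg hφ h2 (ht ▸ le_top))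
    have hb := untop'_nonneg (le_of_le_of_eq le_top ht.symm)
    omega
  · obtain ⟨n, hn⟩ := WithTop.ne_top_iff_exists.mp ht
    by_cases hlt : n < 0
    · rw [order_add_const_of_neg hφ h2 hn.symm hlt, ← hn]
    · have hb : 0 ≤ meromorphicOrderAt φ z := by rw [← hn]; exact_mod_cast not_lt.mp hlt
      have ha := untop'_nonneg (order_add_const_nonneg hφ h2 hb)
      have hb' := untop'_nonneg hb
      omega

lemma zMult_swap (φ : ℂ → ℂ) (c α z : ℂ) :
    zMult (fun w => φ w + c) α z = zMult (fun w => -φ w) (c - α) z := by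
  simp only [zMult]
  have hfun : (fun w => -φ w - (c - α)) = fun w => -(φ w + c - α) := by
    funext w; ring
  rw [hfun, mOrd_neg]

lemma roots_456 : {z : ℂ | z ^ 3 - 15 * z ^ 2 + 74 * z - 120 = 0} = {4, 5, 6} := by
  ext w
  simp only [Set.mem_setOf_eq, Set.mem_insert_iff, Set.mem_singleton_iff]
  constructor
  · intro h
    have h2 : (w - 4) * ((w - 5) * (w - 6)) = 0 := by linear_combination h
    simp only [mul_eq_zero, sub_eq_zero] at h2
    tauto
  · rintro (rfl | rfl | rfl) <;> norm_num

lemma triple_finsum (w : ℂ → ℕ) : (∑ᶠ x ∈ ({4, 5, 6} : Set ℂ), w x) = w 4 + w 5 + w 6 := by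
  have hc : ({4, 5, 6} : Set ℂ) = (({4, 5, 6} : Finset ℂ) : Set ℂ) := by simp
  rw [hc, finsum_mem_coe_finset, Finset.sum_insert (by norm_num),
    Finset.sum_insert (by norm_num), Finset.sum_singleton]
  ring

end AuxLemmas

/-- **Example 1.5.** With `S₁ = {(15-√3)/3, (15+√3)/3}`,
`S₂ = {z : z³ - 15z² + 74z - 120 = 0} = {4, 5, 6}`, `S₃ = {∞}`, the functions
`f = φ + 10` and `g = -φ` share each `Sⱼ` counting multiplicities (hence with weights
`(0, 3, 1)`) for every nonconstant meromorphic `φ`, yet `f ≢ g`. -/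
theorem example_arbitrary_set_fails_456 :
    ({z : ℂ | z ^ 3 - 15 * z ^ 2 + 74 * z - 120 = 0} = {4, 5, 6}) ∧
      ∀ φ : ℂ → ℂ, MNonconst φ →
        EshareEqCM (fun z => φ z + 10) (fun z => -φ z)
          {(15 - (Real.sqrt 3 : ℂ)) / 3, (15 + (Real.sqrt 3 : ℂ)) / 3} ∧
        EshareEqCM (fun z => φ z + 10) (fun z => -φ z)
          {z : ℂ | z ^ 3 - 15 * z ^ 2 + 74 * z - 120 = 0} ∧
        EpoleEqCM (fun z => φ z + 10) (fun z => -φ z) ∧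
        EshareEq (fun z => φ z + 10) (fun z => -φ z)
          {(15 - (Real.sqrt 3 : ℂ)) / 3, (15 + (Real.sqrt 3 : ℂ)) / 3} 0 ∧
        EshareEq (fun z => φ z + 10) (fun z => -φ z)
          {z : ℂ | z ^ 3 - 15 * z ^ 2 + 74 * z - 120 = 0} 3 ∧
        EpoleEq (fun z => φ z + 10) (fun z => -φ z) 1 ∧
        ¬ MEq (fun z => φ z + 10) (fun z => -φ z)  := by
  have hs3 : (Real.sqrt 3 : ℂ) ≠ 0 := Complex.ofReal_ne_zero.mpr (by positivity)
  have hab : (15 - (Real.sqrt 3 : ℂ)) / 3 ≠ (15 + (Real.sqrt 3 : ℂ)) / 3 := by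
    intro h
    exact hs3 (by linear_combination (-3 / 2 : ℂ) * h)
  have h10a : (10 : ℂ) - (15 - (Real.sqrt 3 : ℂ)) / 3 = (15 + (Real.sqrt 3 : ℂ)) / 3 := by ring
  have h10b : (10 : ℂ) - (15 + (Real.sqrt 3 : ℂ)) / 3 = (15 - (Real.sqrt 3 : ℂ)) / 3 := by ring
  refine ⟨roots_456, fun φ hφ => ?_⟩
  obtain ⟨hm, hnc⟩ := hφ
  have hφz : ∀ z : ℂ, MeromorphicAt φ z := fun z => hm z trivial
  have e1 : ∀ z, zMult (fun w => φ w + 10) ((15 - (Real.sqrt 3 : ℂ)) / 3) z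
      = zMult (fun w => -φ w) ((15 + (Real.sqrt 3 : ℂ)) / 3) z := by
    intro z
    rw [zMult_swap φ 10 _ z, h10a]
  have e2 : ∀ z, zMult (fun w => φ w + 10) ((15 + (Real.sqrt 3 : ℂ)) / 3) z
      = zMult (fun w => -φ w) ((15 - (Real.sqrt 3 : ℂ)) / 3) z := by
    intro z
    rw [zMult_swap φ 10 _ z, h10b]
  have e4 : ∀ z, zMult (fun w => φ w + 10) 4 z = zMult (fun w => -φ w) 6 z := by
    intro z
    rw [zMult_swap φ 10 _ z, show (10 : ℂ) - 4 = 6 by norm_num]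
  have e5 : ∀ z, zMult (fun w => φ w + 10) 5 z = zMult (fun w => -φ w) 5 z := by
    intro z
    rw [zMult_swap φ 10 _ z, show (10 : ℂ) - 5 = 5 by norm_num]
  have e6 : ∀ z, zMult (fun w => φ w + 10) 6 z = zMult (fun w => -φ w) 4 z := by
    intro z
    rw [zMult_swap φ 10 _ z, show (10 : ℂ) - 6 = 4 by norm_num]
  refine ⟨?_, ?_, ?_, ?_, ?_, ?_, ?_⟩
  · intro z
    rw [finsum_mem_pair hab, finsum_mem_pair hab, e1 z, e2 z]
    omega
  · intro z
    rw [roots_456, triple_finsum, triple_finsum, e4 z, e5 z, e6 z]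
    omega
  · intro z
    exact pMult_eq_aux 10 (hφz z)
  · intro z
    rw [Ecount, Ecount, finsum_mem_pair hab, finsum_mem_pair hab, e1 z, e2 z]
    omega
  · intro z
    rw [Ecount, Ecount, roots_456, triple_finsum, triple_finsum, e4 z, e5 z, e6 z]
    omega
  · intro z
    rw [pMult_eq_aux 10 (hφz z)]
  · rintro ⟨D, hD, hDe⟩
    refine hnc ⟨-5, D, hD, fun z hz => ?_⟩
    have h : φ z + 10 = -φ z := hDe z hz
    show φ z = -5
    linear_combination h / 2
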